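/- Fix i ∈ I and let Q^i be a probability satisfying the valuation identity for asset i. Then Q^i[ζ_n < ζ for all n ∈ ℕ] = 1; equivalently, Q^i[ζ_n = ζ] = 0 for every n ∈ ℕ. In particular, the sequence (ζ_n) Q^i-a.s. announces the default time ζ. -/

import Mathlib

/-!
Taking `T = ζ_n` and `ξ = 1` in the valuation identity gives
`E_P[Y_{ζ_n} S^i_{ζ_n} ; ζ_n < ζ] = S^i_0 Q^i[ζ_n < ζ]`. Since `S^i` vanishes from `ζ` on, the
restriction to `{ζ_n < ζ}` can be dropped on the left, and as `ζ_n ≤ n` the martingale property of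
the stopped process `Y S^i` between times `0` and `n` turns the left side into
`E_P[Y_0 S^i_0] = S^i_0`. Hence `Q^i[ζ_n < ζ] = 1` for every `n`, and a countable intersection of
`Q^i`-full sets is `Q^i`-full.
-/

open MeasureTheory Filter Set
open scoped NNReal ENNReal

noncomputable section

namespace ExchangeOptions

variable {Ω : Type*} {m : MeasurableSpace Ω}

/-- An extended (possibly infinite-valued) stopping time for the filtration `F`. -/
def IsExtStoppingTime (F : Filtration ℝ≥0 m) (τ : Ω → ℝ≥0∞) : Prop :=
  ∀ t : ℝ≥0, MeasurableSet[F t] {ω | τ ω ≤ (t : ℝ≥0∞)}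

/-- The σ-algebra `F_τ` at an extended stopping time `τ`. -/
def IsExtStoppingTime.measurableSpace {F : Filtration ℝ≥0 m} {τ : Ω → ℝ≥0∞}
    (hτ : IsExtStoppingTime F τ) : MeasurableSpace Ω where
  MeasurableSet' A := ∀ t : ℝ≥0, MeasurableSet[F t] (A ∩ {ω | τ ω ≤ (t : ℝ≥0∞)})
  measurableSet_empty := fun t => by simp
  measurableSet_compl := fun A hA t => by
    have h : Aᶜ ∩ {ω | τ ω ≤ (t : ℝ≥0∞)} =
        {ω | τ ω ≤ (t : ℝ≥0∞)} \ (A ∩ {ω | τ ω ≤ (t : ℝ≥0∞)}) := by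
      ext ω; by_cases h : ω ∈ A <;> simp [h]
    rw [h]
    exact (hτ t).diff (hA t)
  measurableSet_iUnion := fun s hs t => by
    rw [Set.iUnion_inter]
    exact MeasurableSet.iUnion fun n => hs n t

/-- The σ-algebra `F_{τ-}`, generated by `F_0` together with all sets
`A ∩ {s < τ}` where `s : ℝ≥0` and `A ∈ F_s`. -/
def sigmaPre (F : Filtration ℝ≥0 m) (τ : Ω → ℝ≥0∞) : MeasurableSpace Ω :=
  (F 0 : MeasurableSpace Ω) ⊔ MeasurableSpace.generateFrom
    {B | ∃ (s : ℝ≥0) (A : Set Ω), MeasurableSet[F s] A ∧ B = A ∩ {ω | (s : ℝ≥0∞) < τ ω}}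

/-- Evaluation of a process at an extended stopping time (junk value at `∞`). -/
def ev (X : ℝ≥0 → Ω → ℝ) (τ : Ω → ℝ≥0∞) (ω : Ω) : ℝ := X (τ ω).toNNReal ω

/-- The underlying financial model, together with the standing assumptions:
nonnegative adapted assets `S i` vanishing from the default time `ζ` onwards, with
strictly positive a.s.-constant initial values `S0 i`; a nonnegative stochastic discount
factor `Y` with `Y_0 = 1` a.s.; and a sequence `ζn` of stopping times nicely approximating
the default time such that every stopped process `(Y_{ζn ∧ t} S^i_{ζn ∧ t})_t` is a
`P`-a.s. càdlàg martingale.  The probability `P` lives on `F_∞ = ⨆ t, F t`. -/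
structure Model (ι : Type*) {Ω : Type*} {m : MeasurableSpace Ω}
    (F : Filtration ℝ≥0 m) (P : Measure Ω) where
  S : ι → ℝ≥0 → Ω → ℝ
  Y : ℝ≥0 → Ω → ℝ
  S0 : ι → ℝ
  ζ : Ω → ℝ≥0∞
  ζn : ℕ → Ω → ℝ≥0
  nonempty : Nonempty ι
  hFinf : (⨆ t : ℝ≥0, (F t : MeasurableSpace Ω)) = m
  hP : IsProbabilityMeasure P
  hζ : IsExtStoppingTime F ζ
  S_nonneg : ∀ i t ω, 0 ≤ S i t ω
  S_adapted : ∀ i, Adapted F (S i)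
  S_default : ∀ i (t : ℝ≥0) ω, ζ ω ≤ (t : ℝ≥0∞) → S i t ω = 0
  S0_pos : ∀ i, 0 < S0 i
  S0_eq : ∀ i, ∀ᵐ ω ∂P, S i 0 ω = S0 i
  Y_nonneg : ∀ t ω, 0 ≤ Y t ω
  Y0 : ∀ᵐ ω ∂P, Y 0 ω = 1
  ζn_stop : ∀ n, IsStoppingTime F (fun ω => (ζn n ω : WithTop ℝ≥0))
  ζn_mono : ∀ ω, Monotone fun n => ζn n ω
  ζn_le : ∀ (n : ℕ) ω, ζn n ω ≤ (n : ℝ≥0)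
  ζn_tendsto : ∀ ω, Tendsto (fun n => (ζn n ω : ℝ≥0∞)) atTop (nhds (ζ ω))
  mart : ∀ (n : ℕ) (i : ι),
    Martingale (fun t ω => Y (min (ζn n ω) t) ω * S i (min (ζn n ω) t) ω) F P
  cadlag : ∀ (n : ℕ) (i : ι), ∀ᵐ ω ∂P,
    (∀ t : ℝ≥0, ContinuousWithinAt
      (fun s => Y (min (ζn n ω) s) ω * S i (min (ζn n ω) s) ω) (Set.Ici t) t) ∧
    (∀ t : ℝ≥0, 0 < t → ∃ l : ℝ, Tendsto
      (fun s => Y (min (ζn n ω) s) ω * S i (min (ζn n ω) s) ω)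
      (nhdsWithin t (Set.Iio t)) (nhds l))

variable {ι : Type*} {F : Filtration ℝ≥0 m} {P : Measure Ω}

/-- `Q` satisfies the valuation identity for asset `i`:  `Q` is a probability and, for every
extended stopping time `T` and nonnegative `F_T`-measurable `ξ`,
`E_P[Y_T S^i_T ξ ; T < ζ] = S^i_0 E_Q[ξ ; T < ζ]`. -/
def Model.ValId (M : Model ι F P) (i : ι) (Q : Measure Ω) : Prop :=
  IsProbabilityMeasure Q ∧
  ∀ (T : Ω → ℝ≥0∞) (hT : IsExtStoppingTime F T) (ξ : Ω → ℝ≥0∞),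
    Measurable[hT.measurableSpace] ξ →
    ∫⁻ ω in {ω | T ω < M.ζ ω}, ENNReal.ofReal (ev M.Y T ω * ev (M.S i) T ω) * ξ ω ∂P
      = ENNReal.ofReal (M.S0 i) * ∫⁻ ω in {ω | T ω < M.ζ ω}, ξ ω ∂Q

/-- The asset-price ratio process `R^{ij} = (S^i / S^j) 1_{S^j > 0}`. -/
def Model.R (M : Model ι F P) (i j : ι) (t : ℝ≥0) (ω : Ω) : ℝ :=
  if 0 < M.S j t ω then M.S i t ω / M.S j t ω else 0

/-- `ρ^{ij} = liminf_n R^{ij}_{ζ_n}` (computed in `ℝ≥0∞`). -/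
def Model.rho (M : Model ι F P) (i j : ι) (ω : Ω) : ℝ≥0∞ :=
  Filter.liminf (fun n => ENNReal.ofReal (M.R i j (M.ζn n ω) ω)) atTop

/-- The value `EX^{ij}(T) = E_P[Y_T (S^j_T − S^i_T)_+ ; T < ζ]` of the European option to
exchange asset `i` for asset `j` at time `T`. -/
def Model.EX (M : Model ι F P) (i j : ι) (T : Ω → ℝ≥0∞) : ℝ≥0∞ :=
  ∫⁻ ω in {ω | T ω < M.ζ ω},
    ENNReal.ofReal (ev M.Y T ω * max (ev (M.S j) T ω - ev (M.S i) T ω) 0) ∂P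

/-- The value `AX^{ij}(T) = sup_{τ ≤ T} EX^{ij}(τ)` of the American option to exchange
asset `i` for asset `j` up to time `T`; the supremum is over stopping times `τ ≤ T`. -/
def Model.AX (M : Model ι F P) (i j : ι) (T : Ω → ℝ≥0∞) : ℝ≥0∞ :=
  ⨆ (τ : Ω → ℝ≥0∞) (_ : IsExtStoppingTime F τ) (_ : ∀ ω, τ ω ≤ T ω), M.EX i j τ


theorem IsExtStoppingTime.measurable {τ : Ω → ℝ≥0∞} (hτ : IsExtStoppingTime F τ) :
    Measurable τ := by
  refine measurable_of_Iic fun x => ?_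
  induction x using ENNReal.recTopCoe with
  | top => simp
  | coe t => exact F.le t _ (hτ t)

theorem isExtStoppingTime_coe_of_isStoppingTime {τ : Ω → ℝ≥0}
    (hτ : IsStoppingTime F fun ω => (τ ω : WithTop ℝ≥0)) :
    IsExtStoppingTime F fun ω => (τ ω : ℝ≥0∞) := fun t => by
  simpa only [ENNReal.coe_le_coe, WithTop.coe_le_coe] using hτ t

namespace Model

variable (M : Model ι F P)

theorem isExtStoppingTime_ζn (n : ℕ) : IsExtStoppingTime F fun ω => (M.ζn n ω : ℝ≥0∞) :=
  isExtStoppingTime_coe_of_isStoppingTime (M.ζn_stop n)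

theorem measurableSet_ζn_lt_ζ (n : ℕ) : MeasurableSet {ω | (M.ζn n ω : ℝ≥0∞) < M.ζ ω} :=
  measurableSet_lt (M.isExtStoppingTime_ζn n).measurable M.hζ.measurable

theorem integral_stopped_eq_S0 (n : ℕ) (i : ι) :
    ∫ ω, M.Y (M.ζn n ω) ω * M.S i (M.ζn n ω) ω ∂P = M.S0 i := by
  have := M.hP
  have h_at_n : (fun ω => M.Y (min (M.ζn n ω) n) ω * M.S i (min (M.ζn n ω) n) ω)
      = fun ω => M.Y (M.ζn n ω) ω * M.S i (M.ζn n ω) ω := by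
    simp only [min_eq_left (M.ζn_le n _)]
  have h_at_0 : (fun ω => M.Y (min (M.ζn n ω) 0) ω * M.S i (min (M.ζn n ω) 0) ω)
      =ᵐ[P] fun _ => M.S0 i := by
    filter_upwards [M.Y0, M.S0_eq i] with ω hY hS
    simp [hY, hS]
  have h_mart := (M.mart n i).setIntegral_eq (i := 0) (j := n) zero_le MeasurableSet.univ
  rw [setIntegral_univ, setIntegral_univ, h_at_n, integral_congr_ae h_at_0, integral_const,
    probReal_univ, one_smul] at h_mart
  exact h_mart.symm

theorem lintegral_stopped_eq_S0 (n : ℕ) (i : ι) :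
    ∫⁻ ω, ENNReal.ofReal (M.Y (M.ζn n ω) ω * M.S i (M.ζn n ω) ω) ∂P
      = ENNReal.ofReal (M.S0 i) := by
  have h_int : Integrable (fun ω => M.Y (M.ζn n ω) ω * M.S i (M.ζn n ω) ω) P := by
    simpa only [min_eq_left (M.ζn_le n _)] using (M.mart n i).integrable n
  rw [← ofReal_integral_eq_lintegral_ofReal h_int
    (ae_of_all _ fun ω => mul_nonneg (M.Y_nonneg _ _) (M.S_nonneg _ _ _)),
    M.integral_stopped_eq_S0]

theorem setLIntegral_lt_ζ_eq_lintegral (τ : Ω → ℝ≥0) (i : ι) :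
    ∫⁻ ω in {ω | (τ ω : ℝ≥0∞) < M.ζ ω}, ENNReal.ofReal (M.Y (τ ω) ω * M.S i (τ ω) ω) ∂P
      = ∫⁻ ω, ENNReal.ofReal (M.Y (τ ω) ω * M.S i (τ ω) ω) ∂P := by
  refine setLIntegral_eq_of_support_subset fun ω hω => ?_
  by_contra h_default
  exact hω (by simp [M.S_default i _ ω (not_lt.1 h_default)])

theorem ValId.measure_ζn_lt_ζ {M : Model ι F P} {i : ι} {Q : Measure Ω} (hQ : M.ValId i Q)
    (n : ℕ) :
    Q {ω | (M.ζn n ω : ℝ≥0∞) < M.ζ ω} = 1 := by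
  have h_val := hQ.2 _ (M.isExtStoppingTime_ζn n) (fun _ => 1) measurable_const
  simp only [ev, ENNReal.toNNReal_coe, mul_one, setLIntegral_one] at h_val
  rw [M.setLIntegral_lt_ζ_eq_lintegral, M.lintegral_stopped_eq_S0] at h_val
  have h_S0 : ENNReal.ofReal (M.S0 i) ≠ 0 := (ENNReal.ofReal_pos.2 (M.S0_pos i)).ne'
  exact (ENNReal.mul_eq_left h_S0 ENNReal.ofReal_ne_top).1 h_val.symm

end Model

/-- If `Q^i` satisfies the valuation identity for asset `i`, then
`Q^i[ζ_n < ζ for all n] = 1`; equivalently `Q^i[ζ_n = ζ] = 0` for every `n`.  In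
particular, `(ζ_n)` `Q^i`-a.s. announces the default time `ζ`. -/
theorem stmt3 {Ω ι : Type*} {m : MeasurableSpace Ω} {F : Filtration ℝ≥0 m} {P : Measure Ω}
    (M : Model ι F P) (i : ι) (Qi : Measure Ω) (hQi : M.ValId i Qi) :
    Qi {ω | ∀ n : ℕ, (M.ζn n ω : ℝ≥0∞) < M.ζ ω} = 1 ∧
    ∀ n : ℕ, Qi {ω | (M.ζn n ω : ℝ≥0∞) = M.ζ ω} = 0 := by
  have := hQi.1
  have h_ae : ∀ n : ℕ, ∀ᵐ ω ∂Qi, (M.ζn n ω : ℝ≥0∞) < M.ζ ω := fun n =>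
    (mem_ae_iff_prob_eq_one (M.measurableSet_ζn_lt_ζ n)).2 (hQi.measure_ζn_lt_ζ n)
  refine ⟨?_, fun n => ?_⟩
  · rw [ofPred_forall]
    exact (mem_ae_iff_prob_eq_one (.iInter M.measurableSet_ζn_lt_ζ)).1
      (countable_iInter_mem.2 h_ae)
  · exact measure_mono_null (fun ω h_eq => not_lt_of_ge h_eq.ge) (ae_iff.1 (h_ae n))

end ExchangeOptions
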